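/- Let w_1 ≤ … ≤ w_n be general power-law weights with exponent β > 2 and induced probabilities p_i := w_i/∑_j w_j, and let j ≥ 1 be a fixed real number. Then ∑_{i=1}^n p_i^j = Θ(n^{−j(β−2)/(β−1)}) if j > β−1, and ∑_{i=1}^n p_i^j = Θ(n^{1−j}) if 1 ≤ j < β−1. In particular, ‖p‖₂² = ∑_{i=1}^n p_i² = o(1) for every β > 2. -/

import Mathlib

open Finset Filter
open scoped BigOperators Classical

namespace PLSAT

/-- A clause on `n` variables with `k` literals: each literal is a variable index
together with a sign (`true` = positive occurrence, `false` = negated). -/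
abbrev Clause (n k : ℕ) := Fin k → Fin n × Bool

/-- A CNF formula with `m` clauses, each with `k` literals on `n` variables. -/
abbrev Formula (n m k : ℕ) := Fin m → Clause n k

/-- Assignment `A` satisfies clause `c`. -/
def ClauseSat {n k : ℕ} (A : Fin n → Bool) (c : Clause n k) : Prop :=
  ∃ i, A (c i).1 = (c i).2

/-- Assignment `A` satisfies formula `Φ`. -/
def Sat {n m k : ℕ} (A : Fin n → Bool) (Φ : Formula n m k) : Prop :=
  ∀ j, ClauseSat A (Φ j)

def Satisfiable {n m k : ℕ} (Φ : Formula n m k) : Prop := ∃ A, Sat A Φ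

/-- `p` is a probability vector. -/
def IsProbVec (n : ℕ) (p : Fin n → ℝ) : Prop := (∀ i, 0 ≤ p i) ∧ ∑ i, p i = 1

/-- Normalizing constant: the probability that `k` i.i.d. draws from `p` are pairwise
distinct (sum over ordered injective tuples of the product of probabilities). -/
noncomputable def Z (n k : ℕ) (p : Fin n → ℝ) : ℝ :=
  ∑ v : Fin k → Fin n, if Function.Injective v then ∏ i, p (v i) else 0

/-- Probability of sampling the (ordered, signed) clause `c`: the `k` variables are
i.i.d. from `p` conditioned on being pairwise distinct, and each sign is uniform. -/
noncomputable def clauseProb (n k : ℕ) (p : Fin n → ℝ) (c : Clause n k) : ℝ :=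
  (if Function.Injective (fun i => (c i).1) then ∏ i, p (c i).1 else 0) / (2 ^ k * Z n k p)

/-- Probability of sampling the formula `Φ` (clauses independent). -/
noncomputable def formulaProb (n m k : ℕ) (p : Fin n → ℝ) (Φ : Formula n m k) : ℝ :=
  ∏ j, clauseProb n k p (Φ j)

/-- Probability of the event `P` under the random `k`-SAT model. -/
noncomputable def Pr (n m k : ℕ) (p : Fin n → ℝ) (P : Formula n m k → Prop) : ℝ :=
  ∑ Φ : Formula n m k, if P Φ then formulaProb n m k p Φ else 0

/-- Smallest weight `w₁` (weights are sorted non-decreasingly). -/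
noncomputable def wmin (n : ℕ) (w : Fin n → ℝ) : ℝ :=
  if h : 0 < n then w ⟨0, h⟩ else 0

/-- Largest weight `wₙ`. -/
noncomputable def wmax (n : ℕ) (w : Fin n → ℝ) : ℝ :=
  if h : 0 < n then w ⟨n - 1, Nat.sub_lt h one_pos⟩ else 0

/-- Empirical tail function `F(x) = |{i : wᵢ ≥ x}| / n`. -/
noncomputable def tailF (n : ℕ) (w : Fin n → ℝ) (x : ℝ) : ℝ :=
  ((Finset.univ.filter fun i => x ≤ w i).card : ℝ) / n

/-- Strict empirical tail function `F^>(x) = |{i : wᵢ > x}| / n`. -/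
noncomputable def tailFgt (n : ℕ) (w : Fin n → ℝ) (x : ℝ) : ℝ :=
  ((Finset.univ.filter fun i => x < w i).card : ℝ) / n

/-- The family `w` of weight sequences follows a general power law with exponent `β`
and tail constants `α₁ ≤ α₂`: the weights are sorted non-decreasingly and positive,
`w₁ = Θ(1)`, `wₙ = Θ(n^{1/(β-1)})`, and for all `x ∈ [w₁, wₙ]` it holds
`α₁ x^{1-β} ≤ F(x) ≤ α₂ x^{1-β}`. -/
structure IsPowerLawFamily (β α₁ α₂ : ℝ) (w : (n : ℕ) → Fin n → ℝ) : Prop where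
  mono : ∀ n, Monotone (w n)
  pos : ∀ n i, 0 < w n i
  α₁_pos : 0 < α₁
  α₁_le_α₂ : α₁ ≤ α₂
  wmin_theta : ∃ c₁ c₂ : ℝ, 0 < c₁ ∧ ∀ᶠ n in atTop,
      c₁ ≤ wmin n (w n) ∧ wmin n (w n) ≤ c₂
  wmax_theta : ∃ d₁ d₂ : ℝ, 0 < d₁ ∧ ∀ᶠ n : ℕ in atTop,
      d₁ * (n : ℝ) ^ (1 / (β - 1)) ≤ wmax n (w n) ∧
      wmax n (w n) ≤ d₂ * (n : ℝ) ^ (1 / (β - 1))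
  tail : ∀ n, 0 < n → ∀ x : ℝ, wmin n (w n) ≤ x → x ≤ wmax n (w n) →
      α₁ * x ^ (1 - β) ≤ tailF n (w n) x ∧ tailF n (w n) x ≤ α₂ * x ^ (1 - β)

/-- Probabilities induced by weights: `pᵢ = wᵢ / ∑ⱼ wⱼ`. -/
noncomputable def plp (n : ℕ) (w : Fin n → ℝ) (i : Fin n) : ℝ := w i / ∑ j, w j


/-! The tail bound at `x = wᵢ` (the `i`-th smallest weight, `0`-indexed) gives the rank
estimate `wᵢ ^ (β - 1) ≤ α₂ n / (n - i)`, hence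
`∑ wᵢ ^ j ≤ (α₂ n) ^ (j / (β - 1)) ∑_{k ≤ n} k ^ (-j / (β - 1))`. The last sum is
`O(n ^ (1 - j / (β - 1)))` for `j < β - 1` and bounded for `j > β - 1`. For `j = 1` this gives
`∑ wᵢ = O(n)`, while `w₁ = Θ(1)` gives `∑ wᵢ = Ω(n)`; dividing by `(∑ wᵢ) ^ j` yields the upper
bounds. The lower bounds come from the largest weight `wₙ = Θ(n ^ (1 / (β - 1)))` alone when
`j > β - 1`, and from all `pᵢ = Ω(1 / n)` when `j < β - 1`. Finally
`∑ pᵢ ^ 2 ≤ maxᵢ pᵢ = O(n ^ (1 / (β - 1) - 1)) = o(1)`. -/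

section PartialSums

variable {γ : ℝ}

lemma one_sub_mul_rpow_neg_le_rpow_sub_rpow (hγ₀ : 0 ≤ γ) (hγ₁ : γ ≤ 1) {x : ℝ} (hx : 0 ≤ x) :
    (1 - γ) * (x + 1) ^ (-γ) ≤ (x + 1) ^ (1 - γ) - x ^ (1 - γ) := by
  have hy : 0 < x + 1 := by linarith
  -- Bernoulli's inequality for `(1 + s) ^ (1 - γ)` at `s = -1 / (x + 1)`
  have hs : -1 ≤ -(x + 1)⁻¹ := neg_le_neg (inv_le_one_of_one_le₀ (by linarith))
  have hbern := rpow_one_add_le_one_add_mul_self hs (p := 1 - γ) (by linarith) (by linarith)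
  have hquot : 1 + -(x + 1)⁻¹ = x / (x + 1) := by field_simp; ring
  rw [hquot, Real.div_rpow hx hy.le, div_le_iff₀ (by positivity)] at hbern
  have hpow : (x + 1) ^ (1 - γ) * (x + 1)⁻¹ = (x + 1) ^ (-γ) := by
    rw [← Real.rpow_neg_one, ← Real.rpow_add hy]; ring_nf
  nlinarith

lemma sum_range_rpow_neg_le (hγ₀ : 0 ≤ γ) (hγ₁ : γ < 1) (n : ℕ) :
    ∑ k ∈ range n, ((k : ℝ) + 1) ^ (-γ) ≤ (n : ℝ) ^ (1 - γ) / (1 - γ) := by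
  rw [le_div_iff₀ (by linarith), sum_mul]
  calc ∑ k ∈ range n, ((k : ℝ) + 1) ^ (-γ) * (1 - γ)
      ≤ ∑ k ∈ range n, (((k + 1 : ℕ) : ℝ) ^ (1 - γ) - (k : ℝ) ^ (1 - γ)) := by
        gcongr with k
        push_cast
        rw [mul_comm]
        exact one_sub_mul_rpow_neg_le_rpow_sub_rpow hγ₀ hγ₁.le k.cast_nonneg
    _ = (n : ℝ) ^ (1 - γ) := by
        rw [sum_range_sub (fun k : ℕ => (k : ℝ) ^ (1 - γ)), Nat.cast_zero,
          Real.zero_rpow (by linarith), sub_zero]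

lemma sum_range_rpow_neg_le_tsum (hγ : 1 < γ) (n : ℕ) :
    ∑ k ∈ range n, ((k : ℝ) + 1) ^ (-γ) ≤ ∑' k : ℕ, ((k : ℝ) + 1) ^ (-γ) := by
  refine Summable.sum_le_tsum _ (fun k _ => by positivity) ?_
  exact_mod_cast (summable_nat_add_iff 1).2 (Real.summable_nat_rpow.2 (by linarith : -γ < -1))

end PartialSums

section Weights

variable {n : ℕ} {w : Fin n → ℝ}

lemma wmin_le (hw : Monotone w) (i : Fin n) : wmin n w ≤ w i := by
  rw [wmin, dif_pos i.pos]
  exact hw (Fin.mk_le_of_le_val (Nat.zero_le _))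

lemma le_wmax (hw : Monotone w) (i : Fin n) : w i ≤ wmax n w := by
  rw [wmax, dif_pos i.pos]
  exact hw (Fin.le_def.2 (Nat.le_pred_of_lt i.isLt))

lemma sub_div_le_tailF (hw : Monotone w) (i : Fin n) :
    ((n - i : ℕ) : ℝ) / n ≤ tailF n w (w i) := by
  rw [tailF, ← Fin.card_Ici i]
  gcongr
  intro k hk
  simpa using hw (mem_Ici.1 hk)

lemma rpow_mul_le_of_tailF_le {β α : ℝ} (hw : Monotone w) {i : Fin n} (hpos : 0 < w i)
    (htail : tailF n w (w i) ≤ α * w i ^ (1 - β)) :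
    w i ^ (β - 1) * (n - i : ℕ) ≤ α * n := by
  have hn : (0 : ℝ) < n := by exact_mod_cast i.pos
  have hwβ : 0 < w i ^ (β - 1) := Real.rpow_pos_of_pos hpos _
  have h := (sub_div_le_tailF hw i).trans htail
  rw [show 1 - β = -(β - 1) by ring, Real.rpow_neg hpos.le, div_le_iff₀ hn,
    ← div_eq_mul_inv, div_mul_eq_mul_div, le_div_iff₀ hwβ] at h
  linarith

lemma sum_rpow_le_of_tailF_le {β α j : ℝ} (hβ : 1 < β) (hα : 0 ≤ α) (hj : 0 ≤ j)
    (hw : Monotone w) (hpos : ∀ i, 0 < w i)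
    (htail : ∀ i, tailF n w (w i) ≤ α * w i ^ (1 - β)) :
    ∑ i, w i ^ j ≤ (α * n) ^ (j / (β - 1)) * ∑ k ∈ range n, ((k : ℝ) + 1) ^ (-(j / (β - 1))) := by
  set γ := j / (β - 1) with hγ_def
  have hγ : 0 ≤ γ := div_nonneg hj (by linarith)
  have hterm : ∀ i : Fin n, w i ^ j ≤ (α * n) ^ γ * ((n - i : ℕ) : ℝ) ^ (-γ) := by
    intro i
    have hrank : (0 : ℝ) < (n - i : ℕ) := by exact_mod_cast Nat.sub_pos_of_lt i.isLt
    have hwj : w i ^ j = (w i ^ (β - 1)) ^ γ := by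
      rw [← Real.rpow_mul (hpos i).le, hγ_def]
      congr 1
      field_simp [show β - 1 ≠ 0 by linarith]
    rw [hwj, Real.rpow_neg hrank.le, ← div_eq_mul_inv, ← Real.div_rpow (by positivity) hrank.le]
    gcongr
    · exact (Real.rpow_pos_of_pos (hpos i) _).le
    rw [le_div_iff₀ hrank]
    exact rpow_mul_le_of_tailF_le hw (hpos i) (htail i)
  calc ∑ i, w i ^ j ≤ ∑ i : Fin n, (α * n) ^ γ * ((n - i : ℕ) : ℝ) ^ (-γ) :=
        sum_le_sum fun i _ => hterm i
    _ = (α * n) ^ γ * ∑ k ∈ range n, ((k : ℝ) + 1) ^ (-γ) := by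
        rw [← mul_sum, Fin.sum_univ_eq_sum_range (fun i => ((n - i : ℕ) : ℝ) ^ (-γ)),
          ← sum_range_reflect]
        refine congrArg _ (sum_congr rfl fun k hk => ?_)
        rw [show n - (n - 1 - k) = k + 1 by have := mem_range.1 hk; omega]
        push_cast; rfl

lemma plp_nonneg (hw : ∀ i, 0 ≤ w i) (i : Fin n) : 0 ≤ plp n w i :=
  div_nonneg (hw i) (sum_nonneg fun k _ => hw k)

lemma isProbVec_plp (hpos : ∀ i, 0 < w i) (hn : 0 < n) : IsProbVec n (plp n w) := by
  have hW : 0 < ∑ i, w i := sum_pos (fun i _ => hpos i) ⟨⟨0, hn⟩, mem_univ _⟩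
  refine ⟨plp_nonneg fun i => (hpos i).le, ?_⟩
  simp only [plp, ← sum_div, div_self hW.ne']

lemma sum_plp_rpow (hw : ∀ i, 0 ≤ w i) (j : ℝ) :
    ∑ i, plp n w i ^ j = (∑ i, w i ^ j) / (∑ i, w i) ^ j := by
  rw [sum_div]
  exact sum_congr rfl fun i _ => Real.div_rpow (hw i) (sum_nonneg fun k _ => hw k) j

end Weights

lemma IsProbVec.sum_sq_le {n : ℕ} {p : Fin n → ℝ} (hp : IsProbVec n p) {M : ℝ}
    (hM : ∀ i, p i ≤ M) : ∑ i, p i ^ 2 ≤ M := by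
  calc ∑ i, p i ^ 2 ≤ ∑ i, M * p i :=
        sum_le_sum fun i _ => by rw [sq]; exact mul_le_mul_of_nonneg_right (hM i) (hp.1 i)
    _ = M := by rw [← mul_sum, hp.2, mul_one]

namespace IsPowerLawFamily

variable {β α₁ α₂ : ℝ} {w : (n : ℕ) → Fin n → ℝ}

lemma α₂_pos (hw : IsPowerLawFamily β α₁ α₂ w) : 0 < α₂ :=
  hw.α₁_pos.trans_le hw.α₁_le_α₂

lemma sum_rpow_le (hw : IsPowerLawFamily β α₁ α₂ w) (hβ : 1 < β) {j : ℝ} (hj : 0 ≤ j) (n : ℕ) :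
    ∑ i, w n i ^ j ≤
      (α₂ * n) ^ (j / (β - 1)) * ∑ k ∈ range n, ((k : ℝ) + 1) ^ (-(j / (β - 1))) :=
  sum_rpow_le_of_tailF_le hβ hw.α₂_pos.le hj (hw.mono n) (hw.pos n) fun i =>
    (hw.tail n i.pos _ (wmin_le (hw.mono n) i) (le_wmax (hw.mono n) i)).2

lemma exists_sum_le (hw : IsPowerLawFamily β α₁ α₂ w) (hβ : 2 < β) :
    ∃ C > 0, ∀ n : ℕ, ∑ i, w n i ≤ C * n := by
  set γ := 1 / (β - 1)
  have hγ₀ : 0 < γ := div_pos one_pos (by linarith)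
  have hγ₁ : γ < 1 := by rw [div_lt_one (by linarith)]; linarith
  refine ⟨α₂ ^ γ / (1 - γ), div_pos (Real.rpow_pos_of_pos hw.α₂_pos _) (by linarith),
    fun n => ?_⟩
  calc ∑ i, w n i = ∑ i, w n i ^ (1 : ℝ) := by simp only [Real.rpow_one]
    _ ≤ (α₂ * n) ^ γ * ∑ k ∈ range n, ((k : ℝ) + 1) ^ (-γ) :=
        hw.sum_rpow_le (by linarith) zero_le_one n
    _ ≤ (α₂ * n) ^ γ * ((n : ℝ) ^ (1 - γ) / (1 - γ)) :=
        mul_le_mul_of_nonneg_left (sum_range_rpow_neg_le hγ₀.le hγ₁ n)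
          (Real.rpow_nonneg (mul_nonneg hw.α₂_pos.le n.cast_nonneg) _)
    _ = α₂ ^ γ / (1 - γ) * ((n : ℝ) ^ γ * (n : ℝ) ^ (1 - γ)) := by
        rw [Real.mul_rpow hw.α₂_pos.le n.cast_nonneg]; ring
    _ = α₂ ^ γ / (1 - γ) * n := by
        rw [← Real.rpow_add' n.cast_nonneg (by norm_num), add_sub_cancel, Real.rpow_one]

lemma exists_le_weight (hw : IsPowerLawFamily β α₁ α₂ w) :
    ∃ c > 0, ∀ᶠ n in atTop, ∀ i, c ≤ w n i := by
  obtain ⟨c, _, hc, hmin⟩ := hw.wmin_theta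
  exact ⟨c, hc, hmin.mono fun n hn i => hn.1.trans (wmin_le (hw.mono n) i)⟩

lemma exists_mul_le_sum (hw : IsPowerLawFamily β α₁ α₂ w) :
    ∃ c > 0, ∀ᶠ n in atTop, c * n ≤ ∑ i, w n i := by
  obtain ⟨c, hc, hle⟩ := hw.exists_le_weight
  refine ⟨c, hc, hle.mono fun n hn => ?_⟩
  simpa [mul_comm] using card_nsmul_le_sum univ (w n) c fun i _ => hn i

lemma exists_sum_plp_rpow_le (hw : IsPowerLawFamily β α₁ α₂ w) (hβ : 1 < β) {j : ℝ}
    (hj : 0 ≤ j) :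
    ∃ C ≥ 0, ∀ᶠ n : ℕ in atTop, ∑ i, plp n (w n) i ^ j ≤
      C * (n : ℝ) ^ (j / (β - 1) - j) * ∑ k ∈ range n, ((k : ℝ) + 1) ^ (-(j / (β - 1))) := by
  obtain ⟨c, hc, hlow⟩ := hw.exists_mul_le_sum
  refine ⟨α₂ ^ (j / (β - 1)) / c ^ j,
    div_nonneg (Real.rpow_nonneg hw.α₂_pos.le _) (Real.rpow_nonneg hc.le _), ?_⟩
  filter_upwards [hlow, eventually_gt_atTop 0] with n hW hn
  have hn : (0 : ℝ) < n := Nat.cast_pos.2 hn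
  rw [sum_plp_rpow (fun i => (hw.pos n i).le)]
  calc (∑ i, w n i ^ j) / (∑ i, w n i) ^ j
      ≤ (α₂ * n) ^ (j / (β - 1)) * (∑ k ∈ range n, ((k : ℝ) + 1) ^ (-(j / (β - 1)))) /
          (c * n) ^ j := by
        refine div_le_div₀ ?_ (hw.sum_rpow_le hβ hj n) (by positivity)
          (Real.rpow_le_rpow (by positivity) hW hj)
        exact mul_nonneg (Real.rpow_nonneg (mul_nonneg hw.α₂_pos.le hn.le) _)
          (sum_nonneg fun k _ => by positivity)
    _ = _ := by
        have hcj : c ^ j ≠ 0 := (Real.rpow_pos_of_pos hc j).ne'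
        have hnj : (n : ℝ) ^ j ≠ 0 := (Real.rpow_pos_of_pos hn j).ne'
        rw [Real.mul_rpow hw.α₂_pos.le hn.le, Real.mul_rpow hc.le hn.le, Real.rpow_sub hn]
        field_simp

lemma exists_div_le_plp (hw : IsPowerLawFamily β α₁ α₂ w) (hβ : 2 < β) :
    ∃ b > 0, ∀ᶠ n : ℕ in atTop, ∀ i, b / n ≤ plp n (w n) i := by
  obtain ⟨C, hC, hsum⟩ := hw.exists_sum_le hβ
  obtain ⟨c, hc, hle⟩ := hw.exists_le_weight
  refine ⟨c / C, div_pos hc hC, hle.mono fun n hn i => ?_⟩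
  rw [div_div]
  exact div_le_div₀ (hw.pos n i).le (hn i) (sum_pos (fun k _ => hw.pos n k) ⟨i, mem_univ _⟩)
    (hsum n)

lemma exists_le_plp (hw : IsPowerLawFamily β α₁ α₂ w) (hβ : 2 < β) :
    ∃ a > 0, ∀ᶠ n : ℕ in atTop, ∃ i, a * (n : ℝ) ^ (1 / (β - 1) - 1) ≤ plp n (w n) i := by
  obtain ⟨C, hC, hsum⟩ := hw.exists_sum_le hβ
  obtain ⟨d, _, hd, hmax⟩ := hw.wmax_theta
  refine ⟨d / C, div_pos hd hC, ?_⟩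
  filter_upwards [hmax, eventually_gt_atTop 0] with n hn hpos
  have hn' : (0 : ℝ) < n := Nat.cast_pos.2 hpos
  refine ⟨⟨n - 1, Nat.sub_lt hpos one_pos⟩, ?_⟩
  have hwmax := hn.1
  rw [wmax, dif_pos hpos] at hwmax
  calc d / C * (n : ℝ) ^ (1 / (β - 1) - 1) = d * (n : ℝ) ^ (1 / (β - 1)) / (C * n) := by
        rw [Real.rpow_sub_one hn'.ne']; field_simp
    _ ≤ plp n (w n) _ := div_le_div₀ (hw.pos n _).le hwmax
        (sum_pos (fun k _ => hw.pos n k) ⟨⟨0, hpos⟩, mem_univ _⟩) (hsum n)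

lemma exists_plp_le (hw : IsPowerLawFamily β α₁ α₂ w) :
    ∃ D, ∀ᶠ n : ℕ in atTop, ∀ i, plp n (w n) i ≤ D * (n : ℝ) ^ (1 / (β - 1) - 1) := by
  obtain ⟨c, hc, hlow⟩ := hw.exists_mul_le_sum
  obtain ⟨_, d, _, hmax⟩ := hw.wmax_theta
  refine ⟨d / c, ?_⟩
  filter_upwards [hmax, hlow, eventually_gt_atTop 0] with n hn hW hpos i
  have hn' : (0 : ℝ) < n := Nat.cast_pos.2 hpos
  have hwi := (le_wmax (hw.mono n) i).trans hn.2
  calc plp n (w n) i ≤ d * (n : ℝ) ^ (1 / (β - 1)) / (c * n) :=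
        div_le_div₀ ((hw.pos n i).le.trans hwi) hwi (by positivity) hW
    _ = d / c * (n : ℝ) ^ (1 / (β - 1) - 1) := by
        rw [Real.rpow_sub_one hn'.ne']; field_simp

theorem sum_plp_rpow_theta_of_sub_one_lt (hw : IsPowerLawFamily β α₁ α₂ w) (hβ : 2 < β)
    {j : ℝ} (hj : β - 1 < j) :
    ∃ C₁ C₂ : ℝ, 0 < C₁ ∧ ∀ᶠ n : ℕ in atTop,
      C₁ * (n : ℝ) ^ (-(j * (β - 2) / (β - 1))) ≤ ∑ i, plp n (w n) i ^ j ∧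
      ∑ i, plp n (w n) i ^ j ≤ C₂ * (n : ℝ) ^ (-(j * (β - 2) / (β - 1))) := by
  have hβ₁ : β - 1 ≠ 0 := by linarith
  obtain ⟨a, ha, hlow⟩ := hw.exists_le_plp hβ
  obtain ⟨C, hC, hup⟩ := hw.exists_sum_plp_rpow_le (by linarith) (by linarith : 0 ≤ j)
  set T := ∑' k : ℕ, ((k : ℝ) + 1) ^ (-(j / (β - 1)))
  refine ⟨a ^ j, C * T, Real.rpow_pos_of_pos ha j, ?_⟩
  filter_upwards [hlow, hup] with n ⟨i, hi⟩ hn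
  have hp : ∀ k, 0 ≤ plp n (w n) k := plp_nonneg fun k => (hw.pos n k).le
  constructor
  · calc a ^ j * (n : ℝ) ^ (-(j * (β - 2) / (β - 1)))
        = (a * (n : ℝ) ^ (1 / (β - 1) - 1)) ^ j := by
          rw [Real.mul_rpow ha.le (by positivity), ← Real.rpow_mul n.cast_nonneg]
          congr 2; field_simp; ring
      _ ≤ plp n (w n) i ^ j := Real.rpow_le_rpow (by positivity) hi (by linarith)
      _ ≤ ∑ k, plp n (w n) k ^ j :=
          single_le_sum (fun k _ => Real.rpow_nonneg (hp k) j) (mem_univ i)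
  · calc ∑ k, plp n (w n) k ^ j
        ≤ C * (n : ℝ) ^ (j / (β - 1) - j) * ∑ k ∈ range n, ((k : ℝ) + 1) ^ (-(j / (β - 1))) := hn
      _ ≤ C * (n : ℝ) ^ (j / (β - 1) - j) * T := by
          gcongr
          exact sum_range_rpow_neg_le_tsum ((one_lt_div (by linarith)).2 hj) n
      _ = C * T * (n : ℝ) ^ (-(j * (β - 2) / (β - 1))) := by
          rw [show j / (β - 1) - j = -(j * (β - 2) / (β - 1)) by field_simp; ring]; ring

theorem sum_plp_rpow_theta_of_lt_sub_one (hw : IsPowerLawFamily β α₁ α₂ w) (hβ : 2 < β)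
    {j : ℝ} (hj₀ : 0 ≤ j) (hj : j < β - 1) :
    ∃ C₁ C₂ : ℝ, 0 < C₁ ∧ ∀ᶠ n : ℕ in atTop,
      C₁ * (n : ℝ) ^ (1 - j) ≤ ∑ i, plp n (w n) i ^ j ∧
      ∑ i, plp n (w n) i ^ j ≤ C₂ * (n : ℝ) ^ (1 - j) := by
  set γ := j / (β - 1)
  have hγ₁ : γ < 1 := (div_lt_one (by linarith)).2 hj
  obtain ⟨b, hb, hlow⟩ := hw.exists_div_le_plp hβ
  obtain ⟨C, hC, hup⟩ := hw.exists_sum_plp_rpow_le (by linarith) hj₀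
  refine ⟨b ^ j, C / (1 - γ), Real.rpow_pos_of_pos hb j, ?_⟩
  filter_upwards [hlow, hup, eventually_gt_atTop 0] with n hi hn hpos
  have hn' : (0 : ℝ) < n := Nat.cast_pos.2 hpos
  constructor
  · calc b ^ j * (n : ℝ) ^ (1 - j) = ∑ _i : Fin n, (b / n) ^ j := by
          rw [sum_const, card_univ, Fintype.card_fin, nsmul_eq_mul, Real.div_rpow hb.le hn'.le,
            Real.rpow_sub hn', Real.rpow_one]
          field_simp
      _ ≤ ∑ i, plp n (w n) i ^ j :=
          sum_le_sum fun i _ => Real.rpow_le_rpow (by positivity) (hi i) hj₀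
  · calc ∑ k, plp n (w n) k ^ j
        ≤ C * (n : ℝ) ^ (γ - j) * ∑ k ∈ range n, ((k : ℝ) + 1) ^ (-γ) := hn
      _ ≤ C * (n : ℝ) ^ (γ - j) * ((n : ℝ) ^ (1 - γ) / (1 - γ)) := by
          gcongr
          exact sum_range_rpow_neg_le (div_nonneg hj₀ (by linarith)) hγ₁ n
      _ = C / (1 - γ) * ((n : ℝ) ^ (γ - j) * (n : ℝ) ^ (1 - γ)) := by ring
      _ = C / (1 - γ) * (n : ℝ) ^ (1 - j) := by
          rw [← Real.rpow_add hn']; ring_nf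

theorem tendsto_sum_plp_sq (hw : IsPowerLawFamily β α₁ α₂ w) (hβ : 2 < β) :
    Tendsto (fun n : ℕ => ∑ i, plp n (w n) i ^ 2) atTop (nhds 0) := by
  obtain ⟨D, hD⟩ := hw.exists_plp_le
  have hlim : Tendsto (fun n : ℕ => D * (n : ℝ) ^ (1 / (β - 1) - 1)) atTop (nhds 0) := by
    have hexp : 1 / (β - 1) - 1 = -(1 - 1 / (β - 1)) := by ring
    have hpos : 0 < 1 - 1 / (β - 1) := by
      rw [sub_pos, div_lt_one (by linarith)]; linarith
    simpa only [hexp, mul_zero, Function.comp_def] using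
      ((tendsto_rpow_neg_atTop hpos).comp tendsto_natCast_atTop_atTop).const_mul D
  refine tendsto_of_tendsto_of_tendsto_of_le_of_le' tendsto_const_nhds hlim
    (Eventually.of_forall fun n => sum_nonneg fun i _ => sq_nonneg _) ?_
  filter_upwards [hD, eventually_gt_atTop 0] with n hn hpos
  exact (isProbVec_plp (hw.pos n) hpos).sum_sq_le hn

end IsPowerLawFamily

/-- Moments of power-law induced probabilities: for fixed real
`j ≥ 1`, `∑ᵢ pᵢʲ = Θ(n^{-j(β-2)/(β-1)})` if `j > β-1`, and `Θ(n^{1-j})` if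
`j < β-1`; in particular `‖p‖₂² = o(1)` for every `β > 2`. -/
theorem power_law_moments (β α₁ α₂ : ℝ) (hβ : 2 < β)
    (w : (n : ℕ) → Fin n → ℝ) (hw : IsPowerLawFamily β α₁ α₂ w)
    (j : ℝ) (hj : 1 ≤ j) :
    (β - 1 < j → ∃ C₁ C₂ : ℝ, 0 < C₁ ∧ ∀ᶠ n : ℕ in atTop,
        C₁ * (n : ℝ) ^ (-(j * (β - 2) / (β - 1))) ≤ (∑ i, (plp n (w n) i) ^ j) ∧
        (∑ i, (plp n (w n) i) ^ j) ≤ C₂ * (n : ℝ) ^ (-(j * (β - 2) / (β - 1)))) ∧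
    (j < β - 1 → ∃ C₁ C₂ : ℝ, 0 < C₁ ∧ ∀ᶠ n : ℕ in atTop,
        C₁ * (n : ℝ) ^ (1 - j) ≤ (∑ i, (plp n (w n) i) ^ j) ∧
        (∑ i, (plp n (w n) i) ^ j) ≤ C₂ * (n : ℝ) ^ (1 - j)) ∧
    Tendsto (fun n : ℕ => ∑ i, (plp n (w n) i) ^ (2 : ℕ)) atTop (nhds 0) :=
  ⟨fun hjβ => hw.sum_plp_rpow_theta_of_sub_one_lt hβ hjβ,
    fun hjβ => hw.sum_plp_rpow_theta_of_lt_sub_one hβ (by linarith) hjβ,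
    hw.tendsto_sum_plp_sq hβ⟩

end PLSAT
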